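/- In the mixed polyform model on S = ⋀ℂ^{n+s}, the antilinear operators R := Γ₁ ∘ … ∘ Γ_n ∘ Γ_{2n+1} ∘ … ∘ Γ_{2n+2s} ∘ ∗ and R' := Γ_{n+1} ∘ … ∘ Γ_{2n} ∘ ∗ satisfy R² = (−1)^{n(n−1)/2} · id_S and (R')² = (−1)^{n(n+1)/2} · id_S; in particular the signs depend only on n and not on s. -/

import Mathlib

/-- The space of mixed polyforms: the exterior algebra of `ℂ^(n+s)`. -/
noncomputable abbrev MPolyform (n s : ℕ) := ExteriorAlgebra ℂ (Fin (n + s) → ℂ)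

/-- The creation operator `c_k`: wedging with the basis one-form `e_k`. -/
noncomputable def creaM (n s : ℕ) (k : Fin (n + s)) : Module.End ℂ (MPolyform n s) :=
  LinearMap.mulLeft ℂ (ExteriorAlgebra.ι ℂ (Pi.single k 1))

/-- The annihilation operator `c_k†`: interior product (left contraction) with the
`k`-th dual basis vector. -/
noncomputable def anniM (n s : ℕ) (k : Fin (n + s)) : Module.End ℂ (MPolyform n s) :=
  CliffordAlgebra.contractLeft (Q := (0 : QuadraticForm ℂ (Fin (n + s) → ℂ)))
    (LinearMap.proj k)

/-- The gamma operators of the mixed model (0-indexed): `Γ_i = a_i + a_i†`,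
`Γ_{i+n} = I•(a_i − a_i†)` for `i < n` (with `a_i = c_i`), and `Γ_{I+2n} = b_I + b_I†`,
`Γ_{I+2n+s} = b_I − b_I†` for `I < s` (with `b_I = c_{n+I}`). -/
noncomputable def GamM (n s : ℕ) (A : Fin (2 * n + 2 * s)) : Module.End ℂ (MPolyform n s) :=
  if h1 : (A : ℕ) < n then
    creaM n s ⟨A, by omega⟩ + anniM n s ⟨A, by omega⟩
  else if h2 : (A : ℕ) < 2 * n then
    Complex.I • (creaM n s ⟨(A : ℕ) - n, by omega⟩ - anniM n s ⟨(A : ℕ) - n, by omega⟩)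
  else if h3 : (A : ℕ) < 2 * n + s then
    creaM n s ⟨(A : ℕ) - n, by omega⟩ + anniM n s ⟨(A : ℕ) - n, by omega⟩
  else
    creaM n s ⟨(A : ℕ) - n - s, by have := A.isLt; omega⟩
      - anniM n s ⟨(A : ℕ) - n - s, by have := A.isLt; omega⟩

/-- The basis polyform `e_{i₁} ∧ ⋯ ∧ e_{i_k}` indexed by a list of indices. -/
noncomputable def basisMonomialM (n s : ℕ) (l : List (Fin (n + s))) : MPolyform n s :=
  (l.map fun k => ExteriorAlgebra.ι ℂ (Pi.single k (1 : ℂ))).prod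

/-- `st` is the complex conjugation `∗` on mixed polyforms: the `ℂ`-antilinear involution
fixing each basis polyform and conjugating the complex coefficients. -/
def IsConjugationM (n s : ℕ) (st : MPolyform n s → MPolyform n s) : Prop :=
  (∀ x y, st (x + y) = st x + st y) ∧
  (∀ (z : ℂ) (x : MPolyform n s), st (z • x) = (starRingEnd ℂ) z • st x) ∧
  (∀ l : List (Fin (n + s)), st (basisMonomialM n s l) = basisMonomialM n s l)

/-- The antilinear operator `R := Γ₁ ⋯ Γ_n Γ_{2n+1} ⋯ Γ_{2n+2s} ∘ ∗`. -/
noncomputable def RopM (n s : ℕ) (st : MPolyform n s → MPolyform n s) :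
    MPolyform n s → MPolyform n s :=
  fun ψ =>
    ((((List.finRange n).map fun i => GamM n s ⟨i.1, by have := i.2; omega⟩) ++
      ((List.finRange (2 * s)).map fun j =>
        GamM n s ⟨2 * n + j.1, by have := j.2; omega⟩)).prod) (st ψ)

/-- The antilinear operator `R' := Γ_{n+1} ⋯ Γ_{2n} ∘ ∗`. -/
noncomputable def RopM' (n s : ℕ) (st : MPolyform n s → MPolyform n s) :
    MPolyform n s → MPolyform n s :=
  fun ψ =>
    (((List.finRange n).map fun i => GamM n s ⟨n + i.1, by have := i.2; omega⟩).prod) (st ψ)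

/-!
Each `Γ_A` is a scalar `σ_A ∈ {1, i}` times a Majorana-type operator `c_k + ε c_k†` with `ε = ±1`.
The canonical anticommutation relations make distinct `Γ`'s anticommute and give `Γ_A² = σ_A² ε`,
so the square of a product of `m` distinct `Γ`'s is `(-1)^(m choose 2)` times the product of their
squares. The conjugation `∗` fixes the basis polyforms, which `c_k` and `c_k†` map to integer
combinations of basis polyforms; hence `∗` commutes with `c_k` and `c_k†`, commutes with the real
`Γ`'s, anticommutes with `Γ_{n+1}, …, Γ_{2n}`, and `∗² = id`. Thus `R² = P²` for a product `P` of
`n + 2s` distinct `Γ`'s exactly `s` of which square to `-1`, while `R'² = (-1)^n P'²` with `P'` a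
product of `n` `Γ`'s squaring to `1`.
-/

section AnticommutingProducts

variable {R E : Type*} [CommRing R] [Ring E] [Algebra R E]

theorem List.prod_mul_of_forall_anticomm {x : E} {L : List E} (h : ∀ y ∈ L, x * y + y * x = 0) :
    L.prod * x = ((-1 : R) ^ L.length) • (x * L.prod) := by
  induction L with
  | nil => simp
  | cons y t ih =>
    have hy : y * x = -(x * y) := eq_neg_of_add_eq_zero_right (h y List.mem_cons_self)
    calc y * t.prod * x = y * ((-1 : R) ^ t.length • (x * t.prod)) := by
          rw [mul_assoc, ih fun z hz => h z (List.mem_cons_of_mem _ hz)]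
      _ = (-1 : R) ^ (t.length + 1) • (x * (y * t.prod)) := by
          rw [mul_smul_comm, ← mul_assoc, hy, pow_succ, mul_smul, neg_mul, mul_assoc]
          simp
      _ = _ := by rw [List.length_cons, List.prod_cons]

theorem List.prod_map_mul_self_of_pairwise_anticomm {ι : Type*} (F : ι → E) (c : ι → R)
    {l : List ι} (hl : l.Pairwise fun i j => F i * F j + F j * F i = 0)
    (hsq : ∀ i ∈ l, F i * F i = c i • 1) :
    (l.map F).prod * (l.map F).prod = ((-1 : R) ^ l.length.choose 2 * (l.map c).prod) • 1 := by
  induction l with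
  | nil => simp
  | cons i t ih =>
    obtain ⟨hi, ht⟩ := List.pairwise_cons.mp hl
    set P := (t.map F).prod
    have hP : P * F i = (-1 : R) ^ t.length • (F i * P) := by
      rw [List.prod_mul_of_forall_anticomm (R := R) (fun y hy => ?_), List.length_map]
      obtain ⟨j, hj, rfl⟩ := List.mem_map.mp hy
      exact hi j hj
    calc F i * P * (F i * P) = (-1 : R) ^ t.length • (F i * F i * (P * P)) := by
          rw [mul_assoc, ← mul_assoc P, hP, smul_mul_assoc, mul_smul_comm, mul_assoc, mul_assoc]
      _ = _ := by
          rw [hsq i List.mem_cons_self, ih ht fun j hj => hsq j (List.mem_cons_of_mem _ hj),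
            smul_mul_smul_comm, one_mul, smul_smul, List.map_cons, List.prod_cons,
            List.length_cons, Nat.choose_succ_succ', Nat.choose_one_right, pow_add]
          ring_nf

variable {M : Type*} [AddCommGroup M] [Module R M]

theorem List.prod_apply_of_forall_apply_eq_smul (st : M → M) (c : R) {L : List (Module.End R M)}
    (h : ∀ f ∈ L, ∀ x, st (f x) = c • f (st x)) (x : M) :
    st (L.prod x) = c ^ L.length • L.prod (st x) := by
  induction L with
  | nil => simp
  | cons f t ih =>
    rw [List.prod_cons, Module.End.mul_apply, h f List.mem_cons_self,
      ih (fun g hg => h g (List.mem_cons_of_mem _ hg)), map_smul, smul_smul, List.length_cons,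
      pow_succ', Module.End.mul_apply]

end AnticommutingProducts

lemma neg_one_pow_choose_two_add_two_mul {R : Type*} [Monoid R] [HasDistribNeg R] (m k : ℕ) :
    (-1 : R) ^ (m + 2 * k).choose 2 * (-1) ^ k = (-1) ^ m.choose 2 := by
  have h : (m + 2 * k).choose 2 + k = m.choose 2 + 2 * (m * k + k * k) := by
    induction k with
    | zero => simp
    | succ k ih =>
      rw [show m + 2 * (k + 1) = m + 2 * k + 1 + 1 by ring,
        Nat.choose_succ_succ' (m + 2 * k + 1) 1, Nat.choose_succ_succ' (m + 2 * k) 1,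
        Nat.choose_one_right, Nat.choose_one_right]
      linarith [ih]
  rw [← pow_add, h, pow_add, pow_mul, neg_one_sq, one_pow, mul_one]

variable {n s : ℕ}

lemma creaM_mul_creaM (j k : Fin (n + s)) :
    creaM n s j * creaM n s k = -(creaM n s k * creaM n s j) := by
  refine LinearMap.ext fun x => ?_
  simp only [creaM, Module.End.mul_apply, LinearMap.mulLeft_apply, LinearMap.neg_apply,
    ← mul_assoc]
  rw [eq_neg_of_add_eq_zero_left (ExteriorAlgebra.ι_add_mul_swap _ _), neg_mul]

lemma anniM_mul_anniM (j k : Fin (n + s)) :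
    anniM n s j * anniM n s k = -(anniM n s k * anniM n s j) :=
  LinearMap.ext fun x => CliffordAlgebra.contractLeft_comm _ _ x

lemma anniM_mul_creaM (j k : Fin (n + s)) :
    anniM n s j * creaM n s k =
      (if j = k then (1 : ℂ) else 0) • 1 - creaM n s k * anniM n s j := by
  refine LinearMap.ext fun x => ?_
  simp only [anniM, creaM, Module.End.mul_apply, LinearMap.mulLeft_apply, LinearMap.sub_apply,
    LinearMap.smul_apply, Module.End.one_apply]
  rw [ExteriorAlgebra.ι, CliffordAlgebra.contractLeft_ι_mul]
  simp [Pi.single_apply]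

noncomputable def majoranaM (n s : ℕ) (ε : ℂ) (k : Fin (n + s)) :
    Module.End ℂ (MPolyform n s) :=
  creaM n s k + ε • anniM n s k

lemma majoranaM_anticomm (ε η : ℂ) (j k : Fin (n + s)) :
    majoranaM n s ε j * majoranaM n s η k + majoranaM n s η k * majoranaM n s ε j =
      ((ε + η) * if j = k then 1 else 0) • 1 := by
  simp only [majoranaM, mul_add, add_mul, smul_mul_assoc, mul_smul_comm]
  rw [creaM_mul_creaM j k, anniM_mul_anniM j k, anniM_mul_creaM j k, anniM_mul_creaM k j,
    if_congr eq_comm rfl rfl]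
  module

lemma majoranaM_mul_self (ε : ℂ) (k : Fin (n + s)) :
    majoranaM n s ε k * majoranaM n s ε k = ε • 1 := by
  have h := majoranaM_anticomm ε ε k k
  rw [if_pos rfl, mul_one, ← two_smul ℂ, ← two_mul, mul_smul] at h
  exact smul_right_injective _ two_ne_zero h

def sigM (n a : ℕ) : ℂ := if n ≤ a ∧ a < 2 * n then Complex.I else 1

def epsM (n s a : ℕ) : ℂ := if a < n ∨ 2 * n ≤ a ∧ a < 2 * n + s then 1 else -1

def modeM (n s : ℕ) (A : Fin (2 * n + 2 * s)) : Fin (n + s) :=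
  if h : (A : ℕ) < n then ⟨A, by omega⟩
  else if h' : (A : ℕ) < 2 * n + s then ⟨A - n, by omega⟩
  else ⟨A - n - s, by omega⟩

lemma GamM_eq_smul_majoranaM (A : Fin (2 * n + 2 * s)) :
    GamM n s A = sigM n A • majoranaM n s (epsM n s A) (modeM n s A) := by
  unfold GamM sigM epsM modeM majoranaM
  split_ifs <;> first | omega | module

lemma modeM_ne_or_epsM_add_eq_zero {A B : Fin (2 * n + 2 * s)} (h : A ≠ B) :
    modeM n s A ≠ modeM n s B ∨ epsM n s A + epsM n s B = 0 := by
  have h' : (A : ℕ) ≠ B := Fin.val_ne_of_ne h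
  unfold modeM epsM
  split_ifs <;> first | (left; simp only [ne_eq, Fin.mk.injEq]; omega) | (right; norm_num)

lemma GamM_anticomm {A B : Fin (2 * n + 2 * s)} (h : A ≠ B) :
    GamM n s A * GamM n s B + GamM n s B * GamM n s A = 0 := by
  rw [GamM_eq_smul_majoranaM A, GamM_eq_smul_majoranaM B, smul_mul_smul_comm,
    smul_mul_smul_comm, mul_comm (sigM n B), ← smul_add, majoranaM_anticomm]
  rcases modeM_ne_or_epsM_add_eq_zero h with h | h <;> simp [h]

lemma GamM_mul_self (A : Fin (2 * n + 2 * s)) :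
    GamM n s A * GamM n s A = (sigM n A ^ 2 * epsM n s A) • 1 := by
  rw [GamM_eq_smul_majoranaM, smul_mul_smul_comm, majoranaM_mul_self, smul_smul, sq]

lemma starRingEnd_epsM (a : ℕ) : starRingEnd ℂ (epsM n s a) = epsM n s a := by
  unfold epsM
  split_ifs <;> simp

lemma basisMonomialM_cons (k : Fin (n + s)) (l : List (Fin (n + s))) :
    basisMonomialM n s (k :: l) = creaM n s k (basisMonomialM n s l) := rfl

lemma span_basisMonomialM : Submodule.span ℂ (Set.range (basisMonomialM n s)) = ⊤ := by
  set S := Submodule.span ℂ (Set.range (basisMonomialM n s))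
  have hmul : ∀ a ∈ S, ∀ b ∈ S, a * b ∈ S := fun a ha b hb => by
    refine (Submodule.span_mul_span ℂ _ _).le.trans (Submodule.span_mono ?_)
      (Submodule.mul_mem_mul ha hb)
    rintro _ ⟨_, ⟨l₁, rfl⟩, _, ⟨l₂, rfl⟩, rfl⟩
    exact ⟨l₁ ++ l₂, by simp [basisMonomialM, List.prod_append]⟩
  refine eq_top_iff.mpr ?_
  rintro x -
  induction x using ExteriorAlgebra.induction with
  | algebraMap r =>
    rw [Algebra.algebraMap_eq_smul_one]
    exact S.smul_mem r (Submodule.subset_span ⟨[], rfl⟩)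
  | ι v =>
    rw [← (Pi.basisFun ℂ (Fin (n + s))).sum_repr v, map_sum]
    refine S.sum_mem fun k _ => ?_
    rw [map_smul]
    exact S.smul_mem _ (Submodule.subset_span ⟨[k], by simp [basisMonomialM]⟩)
  | mul a b ha hb => exact hmul a ha b hb
  | add a b ha hb => exact S.add_mem ha hb

noncomputable def conjProdM (n s : ℕ) (st : MPolyform n s → MPolyform n s)
    (L : List (Fin (2 * n + 2 * s))) (ψ : MPolyform n s) : MPolyform n s :=
  (L.map (GamM n s)).prod (st ψ)

namespace IsConjugationM

variable {st : MPolyform n s → MPolyform n s} (hst : IsConjugationM n s st)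
include hst

def toStarLinear : MPolyform n s →ₗ⋆[ℂ] MPolyform n s where
  toFun := st
  map_add' := hst.1
  map_smul' := hst.2.1

lemma involutive (x : MPolyform n s) : st (st x) = x := by
  have h : hst.toStarLinear.comp hst.toStarLinear = LinearMap.id :=
    LinearMap.ext_on_range span_basisMonomialM fun l => by
      simp [toStarLinear, hst.2.2]
  exact LinearMap.congr_fun h x

lemma map_sub (x y : MPolyform n s) : st (x - y) = st x - st y :=
  hst.toStarLinear.map_sub x y

lemma comm_of_forall_basisMonomialM {f : Module.End ℂ (MPolyform n s)}
    (hf : ∀ l, st (f (basisMonomialM n s l)) = f (basisMonomialM n s l)) (x : MPolyform n s) :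
    st (f x) = f (st x) := by
  have h : hst.toStarLinear.comp f = f.comp hst.toStarLinear :=
    LinearMap.ext_on_range span_basisMonomialM fun l => by
      simp [toStarLinear, hf, hst.2.2]
  exact LinearMap.congr_fun h x

lemma creaM_comm (k : Fin (n + s)) (x : MPolyform n s) :
    st (creaM n s k x) = creaM n s k (st x) :=
  hst.comm_of_forall_basisMonomialM (fun l => hst.2.2 (k :: l)) x

lemma anniM_basisMonomialM (k : Fin (n + s)) (l : List (Fin (n + s))) :
    st (anniM n s k (basisMonomialM n s l)) = anniM n s k (basisMonomialM n s l) := by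
  induction l with
  | nil =>
    rw [show anniM n s k (basisMonomialM n s []) = 0 from CliffordAlgebra.contractLeft_one _ _]
    exact hst.toStarLinear.map_zero
  | cons j t ih =>
    rw [basisMonomialM_cons, ← Module.End.mul_apply, anniM_mul_creaM, LinearMap.sub_apply,
      LinearMap.smul_apply, Module.End.one_apply, Module.End.mul_apply, hst.map_sub, hst.2.1,
      hst.creaM_comm, ih, hst.2.2]
    congr 2
    split_ifs <;> simp

lemma anniM_comm (k : Fin (n + s)) (x : MPolyform n s) :
    st (anniM n s k x) = anniM n s k (st x) :=
  hst.comm_of_forall_basisMonomialM (hst.anniM_basisMonomialM k) x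

lemma majoranaM_comm {ε : ℂ} (hε : starRingEnd ℂ ε = ε) (k : Fin (n + s))
    (x : MPolyform n s) :
    st (majoranaM n s ε k x) = majoranaM n s ε k (st x) := by
  rw [majoranaM, LinearMap.add_apply, LinearMap.smul_apply, hst.1, hst.2.1, hε,
    hst.creaM_comm, hst.anniM_comm]
  rfl

lemma GamM_apply {A : Fin (2 * n + 2 * s)} {c : ℂ}
    (hc : starRingEnd ℂ (sigM n A) = c * sigM n A) (x : MPolyform n s) :
    st (GamM n s A x) = c • GamM n s A (st x) := by
  rw [GamM_eq_smul_majoranaM, LinearMap.smul_apply, LinearMap.smul_apply, hst.2.1, hc,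
    hst.majoranaM_comm (starRingEnd_epsM _), mul_smul]

lemma conjProdM_conjProdM {L : List (Fin (2 * n + 2 * s))} (hL : L.Nodup) {c : ℂ}
    (hc : ∀ A ∈ L, starRingEnd ℂ (sigM n A) = c * sigM n A) (ψ : MPolyform n s) :
    conjProdM n s st L (conjProdM n s st L ψ) =
      (c ^ L.length * (-1) ^ L.length.choose 2 *
        (L.map fun A : Fin (2 * n + 2 * s) => sigM n A ^ 2 * epsM n s A).prod) • ψ := by
  have hcomm : ∀ f ∈ L.map (GamM n s), ∀ x, st (f x) = c • f (st x) := by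
    simp only [List.mem_map]
    rintro _ ⟨A, hA, rfl⟩ x
    exact hst.GamM_apply (hc A hA) x
  rw [conjProdM, conjProdM, List.prod_apply_of_forall_apply_eq_smul st c hcomm, hst.involutive,
    map_smul, ← Module.End.mul_apply,
    List.prod_map_mul_self_of_pairwise_anticomm _ _ (hL.imp GamM_anticomm)
      fun A _ => GamM_mul_self A,
    List.length_map, LinearMap.smul_apply, Module.End.one_apply, smul_smul, mul_assoc]

end IsConjugationM

def indicesR (n s : ℕ) : List (Fin (2 * n + 2 * s)) :=
  (List.finRange n).map (fun i => ⟨i, by have := i.2; omega⟩) ++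
    (List.finRange (2 * s)).map fun j => ⟨2 * n + j, by have := j.2; omega⟩

def indicesR' (n s : ℕ) : List (Fin (2 * n + 2 * s)) :=
  (List.finRange n).map fun i : Fin n => ⟨n + i, by have := i.2; omega⟩

lemma RopM_eq_conjProdM (st : MPolyform n s → MPolyform n s) :
    RopM n s st = conjProdM n s st (indicesR n s) := by
  funext ψ
  simp only [RopM, conjProdM, indicesR, List.map_append, List.map_map]
  rfl

lemma RopM'_eq_conjProdM (st : MPolyform n s → MPolyform n s) :
    RopM' n s st = conjProdM n s st (indicesR' n s) := by
  funext ψ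
  simp only [RopM', conjProdM, indicesR', List.map_map]
  rfl

lemma indicesR_nodup : (indicesR n s).Nodup := by
  rw [indicesR, List.nodup_append]
  refine ⟨(List.nodup_finRange n).map fun i j h => ?_,
    (List.nodup_finRange _).map fun i j h => ?_, ?_⟩
  · simpa [Fin.ext_iff] using h
  · simpa [Fin.ext_iff] using h
  · simp only [List.mem_map]
    rintro _ ⟨i, -, rfl⟩ _ ⟨j, -, rfl⟩ h
    simp only [Fin.mk.injEq] at h
    omega

lemma indicesR'_nodup : (indicesR' n s).Nodup :=
  (List.nodup_finRange n).map fun i j h => by simpa [Fin.ext_iff] using h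

lemma sigM_of_mem_indicesR {A : Fin (2 * n + 2 * s)} (hA : A ∈ indicesR n s) : sigM n A = 1 := by
  simp only [indicesR, List.mem_append, List.mem_map] at hA
  rw [sigM, if_neg]
  rcases hA with ⟨i, -, rfl⟩ | ⟨j, -, rfl⟩ <;> simp

lemma sigM_of_mem_indicesR' {A : Fin (2 * n + 2 * s)} (hA : A ∈ indicesR' n s) :
    sigM n A = Complex.I := by
  simp only [indicesR', List.mem_map] at hA
  obtain ⟨i, -, rfl⟩ := hA
  rw [sigM, if_pos]
  have := i.2
  simp only
  omega

lemma indicesR_length : (indicesR n s).length = n + 2 * s := by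
  simp [indicesR]

lemma indicesR'_length : (indicesR' n s).length = n := by
  simp [indicesR']

lemma indicesR_prod_weight :
    ((indicesR n s).map fun A : Fin (2 * n + 2 * s) => sigM n A ^ 2 * epsM n s A).prod =
      (-1) ^ s := by
  have hrange : ∀ (m : ℕ) (f : ℕ → ℂ),
      ((List.finRange m).map fun j : Fin m => f j).prod = ((List.range m).map f).prod := by
    intro m f
    rw [← List.map_coe_finRange_eq_range, List.map_map]
    rfl
  simp only [indicesR, List.map_append, List.map_map, List.prod_append, Function.comp_def]
  rw [hrange n fun a => sigM n a ^ 2 * epsM n s a,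
    hrange (2 * s) fun a => sigM n (2 * n + a) ^ 2 * epsM n s (2 * n + a),
    two_mul s, List.range_add, List.map_append, List.prod_append, List.map_map,
    List.prod_eq_one, List.prod_eq_one, List.prod_eq_pow_card _ (-1), List.length_map,
    List.length_range, one_mul, one_mul]
  all_goals
    intro x hx
    obtain ⟨a, ha, rfl⟩ := List.mem_map.mp hx
    rw [List.mem_range] at ha
    simp only [Function.comp_apply, sigM, epsM]
    split_ifs <;> first | omega | norm_num

lemma indicesR'_prod_weight :
    ((indicesR' n s).map fun A : Fin (2 * n + 2 * s) => sigM n A ^ 2 * epsM n s A).prod = 1 := by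
  refine List.prod_eq_one fun x hx => ?_
  obtain ⟨A, hA, rfl⟩ := List.mem_map.mp hx
  rw [sigM_of_mem_indicesR' hA, epsM, if_neg]
  · simp
  obtain ⟨i, -, rfl⟩ := List.mem_map.mp hA
  have := i.2
  simp only
  omega

theorem RopM_RopM'_sq_general (n s : ℕ)
    (st : MPolyform n s → MPolyform n s) (hst : IsConjugationM n s st) (ψ : MPolyform n s) :
    RopM n s st (RopM n s st ψ) = ((-1 : ℂ) ^ (n * (n - 1) / 2)) • ψ ∧
    RopM' n s st (RopM' n s st ψ) = ((-1 : ℂ) ^ (n * (n + 1) / 2)) • ψ := by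
  have hR := hst.conjProdM_conjProdM indicesR_nodup (c := 1)
    (fun A hA => by rw [sigM_of_mem_indicesR hA, map_one, one_mul]) ψ
  have hR' := hst.conjProdM_conjProdM indicesR'_nodup (c := -1)
    (fun A hA => by rw [sigM_of_mem_indicesR' hA, Complex.conj_I, neg_one_mul]) ψ
  rw [RopM_eq_conjProdM, RopM'_eq_conjProdM, hR, hR', indicesR_prod_weight,
    indicesR'_prod_weight, indicesR_length, indicesR'_length, one_pow, one_mul, mul_one]
  have h : n + n.choose 2 = n * (n + 1) / 2 :=
    calc n + n.choose 2 = (n + 1).choose 2 := by rw [Nat.choose_succ_succ', Nat.choose_one_right]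
      _ = n * (n + 1) / 2 := by rw [Nat.choose_two_right, Nat.add_sub_cancel, mul_comm]
  rw [neg_one_pow_choose_two_add_two_mul, ← pow_add, h, Nat.choose_two_right]
  exact ⟨rfl, rfl⟩

/-- `R² = (−1)^{n(n−1)/2} id` and `(R')² = (−1)^{n(n+1)/2} id`; in particular the signs
depend only on `n` and not on `s`. -/
theorem RopM_RopM'_sq (n s : ℕ) (hns : 1 ≤ n + s)
    (st : MPolyform n s → MPolyform n s) (hst : IsConjugationM n s st) (ψ : MPolyform n s) :
    RopM n s st (RopM n s st ψ) = ((-1 : ℂ) ^ (n * (n - 1) / 2)) • ψ ∧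
    RopM' n s st (RopM' n s st ψ) = ((-1 : ℂ) ^ (n * (n + 1) / 2)) • ψ :=
  RopM_RopM'_sq_general n s st hst ψ
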